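/- Under the three-tier association model, conditional on the event that the user associates with the UAV tier, the horizontal serving distance X_v = √(Z_v² − h_v²) satisfies P[X_v > x | UAV association] = exp(−π·(λ_v + λ_m·P_mv + λ_s·P_sv)·x²) for every x ≥ 0. -/

import Mathlib

/-!
Outside a null set each `Z_k` exceeds `h_k > 0`, and there association with the UAV tier reads
`c Z_v < Z_m ∧ d Z_v < Z_s` with `c = (P_m / P_v)^(1/η)`, `d = (P_s / P_v)^(1/η)`. The height
conditions give `h_m ≤ c h_v` and `h_s ≤ d h_v`, so for `z > h_v` the tails of `Z_m` at `c z` and of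
`Z_s` at `d z` are Gaussian in `z`. By independence, integrating their product against the density
`2πλ_v z exp(-πλ_v (z² - h_v²))` of `Z_v` over `z > t` gives, with `L = λ_v + λ_m c² + λ_s d²`,
`P[Z_v > t, UAV] = (λ_v / L) exp(-πL (t² - C))` for all `t ≥ h_v` and some constant `C`.
Dividing by the value at `t = h_v` and taking `t² = h_v² + x²` gives the claim.
-/

open MeasureTheory ProbabilityTheory Real Set Filter
open scoped ENNReal Topology

lemma rpow_one_div_sq {x : ℝ} (hx : 0 ≤ x) (η : ℝ) : (x ^ (1 / η)) ^ 2 = x ^ (2 / η) := by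
  rw [← rpow_mul_natCast hx]
  ring_nf

lemma le_rpow_one_div_mul_of_sq_le {a b x η : ℝ} (ha : 0 ≤ a) (hb : 0 ≤ b) (hx : 0 ≤ x)
    (h : a ^ 2 ≤ x ^ (2 / η) * b ^ 2) : a ≤ x ^ (1 / η) * b :=
  (pow_le_pow_iff_left₀ ha (by positivity) two_ne_zero).1 <| by rwa [mul_pow, rpow_one_div_sq hx]

lemma mul_rpow_neg_lt_mul_rpow_neg_iff {P Q m z η : ℝ} (hP : 0 < P) (hQ : 0 < Q) (hm : 0 < m)
    (hz : 0 < z) (hη : 0 < η) : P * m ^ (-η) < Q * z ^ (-η) ↔ (P / Q) ^ (1 / η) * z < m := by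
  have hpow : ((P / Q) ^ (1 / η) * z) ^ η = P / Q * z ^ η := by
    rw [mul_rpow (by positivity) hz.le, ← rpow_mul (by positivity), one_div_mul_cancel hη.ne',
      rpow_one]
  rw [← rpow_lt_rpow_iff (by positivity) hm.le hη, hpow, rpow_neg hz.le, rpow_neg hm.le,
    ← div_eq_mul_inv, ← div_eq_mul_inv, div_lt_div_iff₀ (by positivity) (by positivity),
    div_mul_eq_mul_div, div_lt_iff₀ hQ, mul_comm (m ^ η)]

lemma lt_sqrt_sq_sub_sq_iff {x z h : ℝ} (hx : 0 ≤ x) (hz : 0 < z) :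
    x < √(z ^ 2 - h ^ 2) ↔ √(h ^ 2 + x ^ 2) < z := by
  rw [lt_sqrt hx, sqrt_lt' hz]
  constructor <;> intro <;> linarith

lemma hasDerivAt_exp_neg_mul_sq_sub (L c z : ℝ) :
    HasDerivAt (fun z => exp (-(L * (z ^ 2 - c)))) (-(2 * L * z * exp (-(L * (z ^ 2 - c))))) z := by
  have h : HasDerivAt (fun z => -(L * (z ^ 2 - c))) (-(L * (2 * z))) z :=
    ((((hasDerivAt_pow 2 z).sub_const c).const_mul L).neg).congr_deriv (by simp)
  exact h.exp.congr_deriv (by ring)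

lemma setLIntegral_Ioi_mul_exp_neg_mul_sq_sub {a L : ℝ} (ha : 0 ≤ a) (hL : 0 < L) (K c : ℝ)
    (hK : 0 ≤ K) :
    ∫⁻ z in Ioi a, ENNReal.ofReal (K * z * exp (-(L * (z ^ 2 - c)))) =
      ENNReal.ofReal (K / (2 * L) * exp (-(L * (a ^ 2 - c)))) := by
  set F : ℝ → ℝ := fun z => -(K / (2 * L)) * exp (-(L * (z ^ 2 - c)))
  have hF : ∀ z ∈ Ici a, HasDerivAt F (K * z * exp (-(L * (z ^ 2 - c)))) z := fun z _ => by
    refine ((hasDerivAt_exp_neg_mul_sq_sub L c z).const_mul (-(K / (2 * L)))).congr_deriv ?_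
    field_simp
  have hF_nonneg : ∀ z ∈ Ioi a, 0 ≤ K * z * exp (-(L * (z ^ 2 - c))) := fun z hz => by
    have : 0 < z := ha.trans_lt hz
    positivity
  have hF_tendsto : Tendsto F atTop (𝓝 0) := by
    have : Tendsto (fun z : ℝ => -(L * (z ^ 2 - c))) atTop atBot :=
      tendsto_neg_atTop_atBot.comp
        (((tendsto_pow_atTop two_ne_zero).atTop_add tendsto_const_nhds).const_mul_atTop hL)
    simpa [F] using (tendsto_exp_atBot.comp this).const_mul (-(K / (2 * L)))
  rw [← ofReal_integral_eq_lintegral_ofReal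
      (integrableOn_Ioi_deriv_of_nonneg' hF hF_nonneg hF_tendsto)
      ((ae_restrict_iff' measurableSet_Ioi).2 (ae_of_all _ hF_nonneg)),
    integral_Ioi_of_hasDerivAt_of_nonneg' hF hF_nonneg hF_tendsto]
  simp [F]

lemma cond_congr_ae {Ω : Type*} [MeasurableSpace Ω] {μ : Measure Ω} {s s' t t' : Set Ω}
    (hs : s =ᵐ[μ] s') (ht : t =ᵐ[μ] t') : μ[t | s] = μ[t' | s'] := by
  have : μ[|s] = μ[|s'] := by
    rw [ProbabilityTheory.cond, ProbabilityTheory.cond, Measure.restrict_congr_set hs,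
      measure_congr hs]
  rw [this]
  exact measure_congr (cond_absolutelyContinuous.ae_eq ht)

lemma measure_mem_and_lt_and_lt_eq_setLIntegral {Ω : Type*} [MeasurableSpace Ω] {μ : Measure Ω}
    [IsFiniteMeasure μ] {Y₁ Y₂ X : Ω → ℝ} (hY₁ : Measurable Y₁) (hY₂ : Measurable Y₂)
    (hX : Measurable X) (hind : iIndepFun ![Y₁, Y₂, X] μ) {s : Set ℝ} (hs : MeasurableSet s)
    {f g : ℝ → ℝ} (hf : Measurable f) (hg : Measurable g) :
    μ {ω | X ω ∈ s ∧ f (X ω) < Y₁ ω ∧ g (X ω) < Y₂ ω} =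
      ∫⁻ z in s, μ {ω | f z < Y₁ ω} * μ {ω | g z < Y₂ ω} ∂(μ.map X) := by
  have hY : Measurable fun ω => (Y₁ ω, Y₂ ω) := hY₁.prodMk hY₂
  have hmeas : ∀ i, Measurable (![Y₁, Y₂, X] i) := fun i => by fin_cases i <;> assumption
  have hY_law : μ.map (fun ω => (Y₁ ω, Y₂ ω)) = (μ.map Y₁).prod (μ.map Y₂) :=
    (indepFun_iff_map_prod_eq_prod_map_map hY₁.aemeasurable hY₂.aemeasurable).1 <| by
      simpa using hind.indepFun (show (0 : Fin 3) ≠ 1 by decide)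
  have hXY_law : μ.map (fun ω => (X ω, (Y₁ ω, Y₂ ω))) =
      (μ.map X).prod (μ.map fun ω => (Y₁ ω, Y₂ ω)) :=
    (indepFun_iff_map_prod_eq_prod_map_map hX.aemeasurable hY.aemeasurable).1 <| by
      simpa using (hind.indepFun_prodMk hmeas 0 1 2 (by decide) (by decide)).symm
  set S : Set (ℝ × ℝ × ℝ) := {p | p.1 ∈ s ∧ f p.1 < p.2.1 ∧ g p.1 < p.2.2}
  have hS : MeasurableSet S :=
    (measurable_fst hs).inter ((measurableSet_lt (hf.comp measurable_fst) measurable_snd.fst).inter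
      (measurableSet_lt (hg.comp measurable_fst) measurable_snd.snd))
  have hsection : ∀ z, (μ.map fun ω => (Y₁ ω, Y₂ ω)) (Prod.mk z ⁻¹' S) =
      s.indicator (fun z => μ {ω | f z < Y₁ ω} * μ {ω | g z < Y₂ ω}) z := by
    intro z
    by_cases hz : z ∈ s
    · have : Prod.mk z ⁻¹' S = Ioi (f z) ×ˢ Ioi (g z) := by ext; simp [S, hz]
      rw [this, hY_law, Measure.prod_prod, Measure.map_apply hY₁ measurableSet_Ioi,
        Measure.map_apply hY₂ measurableSet_Ioi, indicator_of_mem hz]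
      rfl
    · have : Prod.mk z ⁻¹' S = ∅ := by ext; simp [S, hz]
      rw [this, measure_empty, indicator_of_notMem hz]
  calc μ {ω | X ω ∈ s ∧ f (X ω) < Y₁ ω ∧ g (X ω) < Y₂ ω}
      = (μ.map fun ω => (X ω, (Y₁ ω, Y₂ ω))) S := by
        rw [Measure.map_apply (hX.prodMk hY) hS]; rfl
    _ = ∫⁻ z in s, μ {ω | f z < Y₁ ω} * μ {ω | g z < Y₂ ω} ∂(μ.map X) := by
        rw [hXY_law, Measure.prod_apply hS, lintegral_congr hsection, lintegral_indicator hs]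

section NearestPoint

variable {Ω : Type*} [MeasurableSpace Ω]

/-- Tail of the distance from the origin to the nearest point of a planar Poisson point process
of intensity `l` placed at height `h`. -/
def HasNearestPointTail (μ : Measure Ω) (Z : Ω → ℝ) (l h : ℝ) : Prop :=
  ∀ x : ℝ, μ {ω | x < Z ω} =
    if x < h then 1 else ENNReal.ofReal (exp (-(π * l * (x ^ 2 - h ^ 2))))

noncomputable def nearestPointDensity (l h : ℝ) : ℝ → ℝ≥0∞ :=
  (Ioi h).indicator fun z => ENNReal.ofReal (2 * π * l * z * exp (-(π * l * (z ^ 2 - h ^ 2))))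

lemma measurable_nearestPointDensity (l h : ℝ) : Measurable (nearestPointDensity l h) :=
  (Measurable.ennreal_ofReal (by fun_prop)).indicator measurableSet_Ioi

lemma nearestPointDensity_lt_top (l h z : ℝ) : nearestPointDensity l h z < ∞ := by
  unfold nearestPointDensity
  by_cases hz : z ∈ Ioi h <;> simp [hz]

variable {l h : ℝ}

lemma setLIntegral_Ioi_nearestPointDensity (hl : 0 < l) (hh : 0 ≤ h) (a : ℝ) :
    ∫⁻ z in Ioi a, nearestPointDensity l h z =
      ENNReal.ofReal (exp (-(π * l * (max h a ^ 2 - h ^ 2)))) := by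
  rw [nearestPointDensity, setLIntegral_indicator measurableSet_Ioi, Ioi_inter_Ioi,
    setLIntegral_Ioi_mul_exp_neg_mul_sq_sub (hh.trans (le_max_left h a)) (by positivity) _ _
      (by positivity)]
  field_simp

lemma lintegral_nearestPointDensity (hl : 0 < l) (hh : 0 ≤ h) :
    ∫⁻ z, nearestPointDensity l h z = 1 := by
  rw [nearestPointDensity, lintegral_indicator measurableSet_Ioi,
    setLIntegral_Ioi_mul_exp_neg_mul_sq_sub hh (by positivity) _ _ (by positivity)]
  field_simp
  simp

variable {μ : Measure Ω} {Z : Ω → ℝ}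

lemma HasNearestPointTail.measure_lt_of_le (hT : HasNearestPointTail μ Z l h) {x : ℝ}
    (hx : h ≤ x) : μ {ω | x < Z ω} = ENNReal.ofReal (exp (-(π * l * (x ^ 2 - h ^ 2)))) := by
  rw [hT x, if_neg hx.not_gt]

variable [IsProbabilityMeasure μ]

lemma HasNearestPointTail.ae_lt (hZ : Measurable Z) (hT : HasNearestPointTail μ Z l h) :
    ∀ᵐ ω ∂μ, h < Z ω :=
  mem_ae_iff.2 <| (prob_compl_eq_zero_iff (measurableSet_lt measurable_const hZ)).2 <| by
    simp [hT h]

lemma HasNearestPointTail.map_eq_withDensity (hZ : Measurable Z)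
    (hT : HasNearestPointTail μ Z l h) (hl : 0 < l) (hh : 0 ≤ h) :
    μ.map Z = volume.withDensity (nearestPointDensity l h) := by
  have : IsProbabilityMeasure (μ.map Z) := Measure.isProbabilityMeasure_map hZ.aemeasurable
  have : IsProbabilityMeasure (volume.withDensity (nearestPointDensity l h)) :=
    ⟨by rw [withDensity_apply _ MeasurableSet.univ, Measure.restrict_univ,
      lintegral_nearestPointDensity hl hh]⟩
  refine Measure.ext_of_Iic _ _ fun a => ?_
  rw [← compl_Ioi, prob_compl_eq_one_sub measurableSet_Ioi,
    prob_compl_eq_one_sub measurableSet_Ioi, Measure.map_apply hZ measurableSet_Ioi,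
    withDensity_apply _ measurableSet_Ioi, setLIntegral_Ioi_nearestPointDensity hl hh]
  change 1 - μ {ω | a < Z ω} = _
  rcases lt_or_ge a h with ha | ha
  · simp [hT a, ha, ha.le]
  · rw [max_eq_right ha, hT.measure_lt_of_le ha]

end NearestPoint

section Association

variable {Ω : Type*} [MeasurableSpace Ω] {μ : Measure Ω} [IsProbabilityMeasure μ]
  {Zm Zs Zv : Ω → ℝ} {lm ls lv hm hs hv c d : ℝ}

lemma measure_lt_and_mul_lt_and_mul_lt (hZm : Measurable Zm) (hZs : Measurable Zs)
    (hZv : Measurable Zv) (hind : iIndepFun ![Zm, Zs, Zv] μ)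
    (hTm : HasNearestPointTail μ Zm lm hm) (hTs : HasNearestPointTail μ Zs ls hs)
    (hTv : HasNearestPointTail μ Zv lv hv) (hlv : 0 < lv) (hhv : 0 ≤ hv)
    (hc : 0 ≤ c) (hd : 0 ≤ d) (hcm : hm ≤ c * hv) (hds : hs ≤ d * hv) {L C : ℝ}
    (hL : L = lv + lm * c ^ 2 + ls * d ^ 2) (hL_pos : 0 < L)
    (hLC : L * C = lv * hv ^ 2 + lm * hm ^ 2 + ls * hs ^ 2) {t : ℝ} (ht : hv ≤ t) :
    μ {ω | t < Zv ω ∧ c * Zv ω < Zm ω ∧ d * Zv ω < Zs ω} =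
      ENNReal.ofReal (lv / L * exp (-(π * L * (t ^ 2 - C)))) := by
  have hintegrand : ∀ z ∈ Ioi t,
      nearestPointDensity lv hv z * (μ {ω | c * z < Zm ω} * μ {ω | d * z < Zs ω}) =
        ENNReal.ofReal (2 * π * lv * z * exp (-(π * L * (z ^ 2 - C)))) := by
    intro z hz
    have hzv : hv < z := ht.trans_lt hz
    have : 0 < z := hhv.trans_lt hzv
    rw [nearestPointDensity, indicator_of_mem (mem_Ioi.2 hzv),
      hTm.measure_lt_of_le (hcm.trans (by gcongr)), hTs.measure_lt_of_le (hds.trans (by gcongr)),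
      ← ENNReal.ofReal_mul (by positivity), ← ENNReal.ofReal_mul (by positivity),
      mul_assoc, ← exp_add, ← exp_add]
    congr 3
    linear_combination (-π) * hLC + π * z ^ 2 * hL
  change μ {ω | Zv ω ∈ Ioi t ∧ c * Zv ω < Zm ω ∧ d * Zv ω < Zs ω} = _
  rw [measure_mem_and_lt_and_lt_eq_setLIntegral hZm hZs hZv hind measurableSet_Ioi
      (measurable_const_mul c) (measurable_const_mul d), hTv.map_eq_withDensity hZv hlv hhv,
    setLIntegral_withDensity_eq_setLIntegral_mul_non_measurable _
      (measurable_nearestPointDensity lv hv) _ measurableSet_Ioi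
      (ae_of_all _ (nearestPointDensity_lt_top lv hv))]
  simp only [Pi.mul_apply]
  rw [setLIntegral_congr_fun measurableSet_Ioi hintegrand,
    setLIntegral_Ioi_mul_exp_neg_mul_sq_sub (hhv.trans ht) (by positivity) _ _ (by positivity)]
  field_simp

lemma cond_lt_of_mul_lt_and_mul_lt (hZm : Measurable Zm) (hZs : Measurable Zs)
    (hZv : Measurable Zv) (hind : iIndepFun ![Zm, Zs, Zv] μ)
    (hTm : HasNearestPointTail μ Zm lm hm) (hTs : HasNearestPointTail μ Zs ls hs)
    (hTv : HasNearestPointTail μ Zv lv hv) (hlm : 0 ≤ lm) (hls : 0 ≤ ls) (hlv : 0 < lv)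
    (hhv : 0 ≤ hv) (hc : 0 ≤ c) (hd : 0 ≤ d) (hcm : hm ≤ c * hv) (hds : hs ≤ d * hv) {t : ℝ}
    (ht : hv ≤ t) :
    μ[{ω | t < Zv ω} | {ω | c * Zv ω < Zm ω ∧ d * Zv ω < Zs ω}] =
      ENNReal.ofReal (exp (-(π * (lv + lm * c ^ 2 + ls * d ^ 2) * (t ^ 2 - hv ^ 2)))) := by
  set L := lv + lm * c ^ 2 + ls * d ^ 2 with hL_def
  have hL : 0 < L := by positivity
  set C := (lv * hv ^ 2 + lm * hm ^ 2 + ls * hs ^ 2) / L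
  have hLC : L * C = lv * hv ^ 2 + lm * hm ^ 2 + ls * hs ^ 2 := mul_div_cancel₀ _ hL.ne'
  clear_value L C
  have hmeas : MeasurableSet {ω | c * Zv ω < Zm ω ∧ d * Zv ω < Zs ω} :=
    (measurableSet_lt (hZv.const_mul c) hZm).inter (measurableSet_lt (hZv.const_mul d) hZs)
  have hinter : {ω | c * Zv ω < Zm ω ∧ d * Zv ω < Zs ω} ∩ {ω | t < Zv ω} =
      {ω | t < Zv ω ∧ c * Zv ω < Zm ω ∧ d * Zv ω < Zs ω} := by
    ext ω
    exact and_comm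
  have hevent : {ω | c * Zv ω < Zm ω ∧ d * Zv ω < Zs ω} =ᵐ[μ]
      {ω | hv < Zv ω ∧ c * Zv ω < Zm ω ∧ d * Zv ω < Zs ω} := by
    filter_upwards [hTv.ae_lt hZv] with ω hω
    exact propext ⟨fun h => ⟨hω, h⟩, And.right⟩
  rw [cond_apply hmeas, hinter, measure_congr hevent,
    measure_lt_and_mul_lt_and_mul_lt hZm hZs hZv hind hTm hTs hTv hlv hhv hc hd hcm hds hL_def hL
      hLC ht,
    measure_lt_and_mul_lt_and_mul_lt hZm hZs hZv hind hTm hTs hTv hlv hhv hc hd hcm hds hL_def hL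
      hLC le_rfl,
    ← ENNReal.ofReal_inv_of_pos (by positivity), ← ENNReal.ofReal_mul (by positivity)]
  congr 1
  rw [show -(π * L * (t ^ 2 - C)) = -(π * L * (hv ^ 2 - C)) + -(π * L * (t ^ 2 - hv ^ 2)) by ring,
    exp_add]
  field_simp

end Association

theorem stmt7_general
    {Ω : Type*} [MeasureSpace Ω] [IsProbabilityMeasure (ℙ : Measure Ω)]
    (Zm Zs Zv : Ω → ℝ)
    (hZmMeas : Measurable Zm) (hZsMeas : Measurable Zs) (hZvMeas : Measurable Zv)
    (hIndep : iIndepFun ![Zm, Zs, Zv] ℙ)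
    (lm ls lv hm hs hv Pm Ps Pv eta : ℝ)
    (hlm : 0 < lm) (hls : 0 < ls) (hlv : 0 < lv)
    (hhm : 0 < hm) (hhs : 0 < hs) (hhv : 0 < hv)
    (hPm : 0 < Pm) (hPs : 0 < Ps) (hPv : 0 < Pv)
    (heta : 2 < eta)
    (Psm Pmv Psv : ℝ)
    (hPsm : Psm = (Ps / Pm) ^ (2 / eta))
    (hPmv : Pmv = (Pm / Pv) ^ (2 / eta))
    (hPsv : Psv = (Ps / Pv) ^ (2 / eta))
    (hZmCCDF : ∀ x : ℝ, ℙ {ω | Zm ω > x} =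
      if x < hm then 1 else ENNReal.ofReal (Real.exp (-(π * lm * (x ^ 2 - hm ^ 2)))))
    (hZsCCDF : ∀ x : ℝ, ℙ {ω | Zs ω > x} =
      if x < hs then 1 else ENNReal.ofReal (Real.exp (-(π * ls * (x ^ 2 - hs ^ 2)))))
    (hZvCCDF : ∀ x : ℝ, ℙ {ω | Zv ω > x} =
      if x < hv then 1 else ENNReal.ofReal (Real.exp (-(π * lv * (x ^ 2 - hv ^ 2)))))
    (hsm2 : hs ^ 2 ≤ Psm * hm ^ 2) (hmv2 : hm ^ 2 ≤ Pmv * hv ^ 2)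
    (x : ℝ) (hx : 0 ≤ x) :
    ProbabilityTheory.cond ℙ {ω | Pv * Zv ω ^ (-eta) > Pm * Zm ω ^ (-eta) ∧ Pv * Zv ω ^ (-eta) > Ps * Zs ω ^ (-eta)}
      {ω | Real.sqrt (Zv ω ^ 2 - hv ^ 2) > x} =
      ENNReal.ofReal (Real.exp (-(π * (lv + lm * Pmv + ls * Psv) * x ^ 2))) := by
  have hη : 0 < eta := by linarith
  have hsv2 : hs ^ 2 ≤ Psv * hv ^ 2 := by
    have hPsv' : Psv = Psm * Pmv := by
      rw [hPsv, hPsm, hPmv, ← mul_rpow (by positivity) (by positivity),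
        div_mul_div_cancel₀ hPm.ne']
    calc hs ^ 2 ≤ Psm * hm ^ 2 := hsm2
      _ ≤ Psm * (Pmv * hv ^ 2) := by gcongr; rw [hPsm]; positivity
      _ = Psv * hv ^ 2 := by rw [hPsv']; ring
  have hassoc : {ω | Pv * Zv ω ^ (-eta) > Pm * Zm ω ^ (-eta) ∧
      Pv * Zv ω ^ (-eta) > Ps * Zs ω ^ (-eta)} =ᵐ[ℙ]
      {ω | (Pm / Pv) ^ (1 / eta) * Zv ω < Zm ω ∧ (Ps / Pv) ^ (1 / eta) * Zv ω < Zs ω} := by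
    filter_upwards [HasNearestPointTail.ae_lt hZmMeas hZmCCDF,
      HasNearestPointTail.ae_lt hZsMeas hZsCCDF, HasNearestPointTail.ae_lt hZvMeas hZvCCDF]
      with ω hωm hωs hωv
    exact propext <|
      (mul_rpow_neg_lt_mul_rpow_neg_iff hPm hPv (hhm.trans hωm) (hhv.trans hωv) hη).and
        (mul_rpow_neg_lt_mul_rpow_neg_iff hPs hPv (hhs.trans hωs) (hhv.trans hωv) hη)
  have hdist : {ω | Real.sqrt (Zv ω ^ 2 - hv ^ 2) > x} =ᵐ[ℙ] {ω | √(hv ^ 2 + x ^ 2) < Zv ω} := by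
    filter_upwards [HasNearestPointTail.ae_lt hZvMeas hZvCCDF] with ω hωv
    exact propext (lt_sqrt_sq_sub_sq_iff hx (hhv.trans hωv))
  rw [cond_congr_ae hassoc hdist, cond_lt_of_mul_lt_and_mul_lt hZmMeas hZsMeas hZvMeas hIndep
    hZmCCDF hZsCCDF hZvCCDF hlm.le hls.le hlv hhv.le (by positivity) (by positivity)
    (le_rpow_one_div_mul_of_sq_le hhm.le hhv.le (by positivity) (hPmv ▸ hmv2))
    (le_rpow_one_div_mul_of_sq_le hhs.le hhv.le (by positivity) (hPsv ▸ hsv2))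
    (le_sqrt_of_sq_le (by linarith [sq_nonneg x])), sq_sqrt (by positivity),
    rpow_one_div_sq (by positivity), rpow_one_div_sq (by positivity), ← hPmv, ← hPsv]
  ring_nf

theorem stmt7
    {Ω : Type*} [MeasureSpace Ω] [IsProbabilityMeasure (ℙ : Measure Ω)]
    (Zm Zs Zv : Ω → ℝ)
    (hZmMeas : Measurable Zm) (hZsMeas : Measurable Zs) (hZvMeas : Measurable Zv)
    (hIndep : iIndepFun ![Zm, Zs, Zv] ℙ)
    (lm ls lv hm hs hv Pm Ps Pv eta : ℝ)
    (hlm : 0 < lm) (hls : 0 < ls) (hlv : 0 < lv)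
    (hhm : 0 < hm) (hhs : 0 < hs) (hhv : 0 < hv)
    (hPm : 0 < Pm) (hPs : 0 < Ps) (hPv : 0 < Pv)
    (heta : 2 < eta)
    (Psm Pms Pmv Pvm Psv Pvs : ℝ)
    (hPsm : Psm = (Ps / Pm) ^ (2 / eta)) (hPms : Pms = (Pm / Ps) ^ (2 / eta))
    (hPmv : Pmv = (Pm / Pv) ^ (2 / eta)) (hPvm : Pvm = (Pv / Pm) ^ (2 / eta))
    (hPsv : Psv = (Ps / Pv) ^ (2 / eta)) (hPvs : Pvs = (Pv / Ps) ^ (2 / eta))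
    (hZmCCDF : ∀ x : ℝ, ℙ {ω | Zm ω > x} =
      if x < hm then 1 else ENNReal.ofReal (Real.exp (-(π * lm * (x ^ 2 - hm ^ 2)))))
    (hZsCCDF : ∀ x : ℝ, ℙ {ω | Zs ω > x} =
      if x < hs then 1 else ENNReal.ofReal (Real.exp (-(π * ls * (x ^ 2 - hs ^ 2)))))
    (hZvCCDF : ∀ x : ℝ, ℙ {ω | Zv ω > x} =
      if x < hv then 1 else ENNReal.ofReal (Real.exp (-(π * lv * (x ^ 2 - hv ^ 2)))))
    (hsm : hs < hm) (hmv : hm < hv)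
    (hsm2 : hs ^ 2 ≤ Psm * hm ^ 2) (hmv2 : hm ^ 2 ≤ Pmv * hv ^ 2)
    (x : ℝ) (hx : 0 ≤ x) :
    ProbabilityTheory.cond ℙ {ω | Pv * Zv ω ^ (-eta) > Pm * Zm ω ^ (-eta) ∧ Pv * Zv ω ^ (-eta) > Ps * Zs ω ^ (-eta)}
      {ω | Real.sqrt (Zv ω ^ 2 - hv ^ 2) > x} =
      ENNReal.ofReal (Real.exp (-(π * (lv + lm * Pmv + ls * Psv) * x ^ 2))) :=
  stmt7_general Zm Zs Zv hZmMeas hZsMeas hZvMeas hIndep lm ls lv hm hs hv Pm Ps Pv eta hlm hls hlv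
    hhm hhs hhv hPm hPs hPv heta Psm Pmv Psv hPsm hPmv hPsv hZmCCDF hZsCCDF hZvCCDF hsm2 hmv2 x hx
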